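/- arXiv:1407.5783 — 2 statements merged into one kernel-verified Lean document; each statement's English description precedes it below -/
import Mathlib

section
/- (Corollary to Theorem 1.) The density evolution recursion for the regular nonbinary (d_v, d_c, m) LDPC ensemble converges to a fixed point: the sequence defined by x^{(0)} = p(ε) (where p(ε)_i = Σ_{k=i}^m p∘_k(ε)) and x^{(ℓ+1)} = f(g(x^{(ℓ)}); ε) converges, as ℓ → ∞, to a limit x^∞ ∈ ℝ^m satisfying x^∞ = f(g(x^∞); ε). -/
open scoped BigOperators

noncomputable section

/-- Number of `j`-dimensional subspaces `U` of `𝔽₂^m` whose intersection with `W`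
has dimension `k`. -/
def numInter (m j k : ℕ) (W : Submodule (ZMod 2) (Fin m → ZMod 2)) : ℕ :=
  Set.ncard {U : Submodule (ZMod 2) (Fin m → ZMod 2) |
    Module.finrank (ZMod 2) U = j ∧ Module.finrank (ZMod 2) ↥(U ⊓ W) = k}

/-- Number of `j`-dimensional subspaces `U` of `𝔽₂^m` whose sum with `W`
has dimension `k`. -/
def numSum (m j k : ℕ) (W : Submodule (ZMod 2) (Fin m → ZMod 2)) : ℕ :=
  Set.ncard {U : Submodule (ZMod 2) (Fin m → ZMod 2) |
    Module.finrank (ZMod 2) U = j ∧ Module.finrank (ZMod 2) ↥(U ⊔ W) = k}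

/-- Number of `j`-dimensional subspaces of `𝔽₂^m`. -/
def numDim (m j : ℕ) : ℕ :=
  Set.ncard {U : Submodule (ZMod 2) (Fin m → ZMod 2) | Module.finrank (ZMod 2) U = j}

/-- A canonical `i`-dimensional subspace of `𝔽₂^m` (for `i ≤ m`): vectors supported on
the first `i` coordinates. -/
def stdW (m i : ℕ) : Submodule (ZMod 2) (Fin m → ZMod 2) :=
  Submodule.span (ZMod 2) {x | ∀ t : Fin m, i ≤ (t : ℕ) → x t = 0}

/-- `V^m_{i,j,k}`: probability that a uniformly random `j`-dimensional subspace `U`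
of `𝔽₂^m` satisfies `dim (U ⊓ W) = k`, for a fixed `i`-dimensional subspace `W`. -/
def Vprob (m i j k : ℕ) : ℝ := (numInter m j k (stdW m i) : ℝ) / (numDim m j : ℝ)

/-- `C^m_{i,j,k}`: probability that a uniformly random `j`-dimensional subspace `U`
of `𝔽₂^m` satisfies `dim (U ⊔ W) = k`, for a fixed `i`-dimensional subspace `W`. -/
def Cprob (m i j k : ℕ) : ℝ := (numSum m j k (stdW m i) : ℝ) / (numDim m j : ℝ)

/-- The operation `⊡`. -/
def boxdot (m : ℕ) (a b : Fin (m+1) → ℝ) : Fin (m+1) → ℝ :=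
  fun k => ∑ i : Fin (m+1), ∑ j : Fin (m+1), Vprob m i j k * a i * b j

/-- The operation `⊠`. -/
def boxtimes (m : ℕ) (a b : Fin (m+1) → ℝ) : Fin (m+1) → ℝ :=
  fun k => ∑ i : Fin (m+1), ∑ j : Fin (m+1), Cprob m i j k * a i * b j

/-- `boxdotPow m n a = ⊡^{n+1} a` (the `(n+1)`-fold `⊡`-product of `a` with itself). -/
def boxdotPow (m : ℕ) : ℕ → (Fin (m+1) → ℝ) → (Fin (m+1) → ℝ)
  | 0, a => a
  | n+1, a => boxdot m a (boxdotPow m n a)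

/-- `boxtimesPow m n a = ⊠^{n+1} a` (the `(n+1)`-fold `⊠`-product of `a` with itself). -/
def boxtimesPow (m : ℕ) : ℕ → (Fin (m+1) → ℝ) → (Fin (m+1) → ℝ)
  | 0, a => a
  | n+1, a => boxtimes m a (boxtimesPow m n a)

/-- `p∘(ε)`. -/
def pcirc (m : ℕ) (ε : ℝ) : Fin (m+1) → ℝ :=
  fun i => (m.choose i : ℝ) * ε ^ (i : ℕ) * (1 - ε) ^ (m - (i : ℕ))

/-- `f∘(y∘; ε) = p∘(ε) ⊡ (⊡^{d_v − 1} y∘)`. -/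
def fcirc (m dv : ℕ) (ε : ℝ) (y : Fin (m+1) → ℝ) : Fin (m+1) → ℝ :=
  boxdot m (pcirc m ε) (boxdotPow m (dv - 2) y)

/-- `g∘(x∘) = ⊠^{d_c − 1} x∘`. -/
def gcirc (m dc : ℕ) (x : Fin (m+1) → ℝ) : Fin (m+1) → ℝ :=
  boxtimesPow m (dc - 2) x

/-- Extension of `x ∈ ℝ^m` (indexed `1,…,m`) to `ℕ` with conventions `x_0 = 1`,
`x_i = 0` for `i > m`. -/
def extSeq (m : ℕ) (x : Fin m → ℝ) : ℕ → ℝ :=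
  fun i => if _h0 : i = 0 then 1 else if h : i ≤ m then x ⟨i - 1, by omega⟩ else 0

/-- `x̃ ∈ ℝ^{m+1}` with `x̃_i = x_i − x_{i+1}`. -/
def tilde (m : ℕ) (x : Fin m → ℝ) : Fin (m+1) → ℝ :=
  fun i => extSeq m x i - extSeq m x ((i : ℕ) + 1)

/-- `f(y; ε)_i = Σ_{k=i}^m f∘(ỹ; ε)_k` (here `i : Fin m` denotes the index `i+1 ∈ {1,…,m}`). -/
def fFun (m dv : ℕ) (ε : ℝ) (y : Fin m → ℝ) : Fin m → ℝ :=
  fun i => ∑ k : Fin (m+1), if (i : ℕ) + 1 ≤ (k : ℕ) then fcirc m dv ε (tilde m y) k else 0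

/-- `g(x)_i = Σ_{k=i}^m g∘(x̃)_k`. -/
def gFun (m dc : ℕ) (x : Fin m → ℝ) : Fin m → ℝ :=
  fun i => ∑ k : Fin (m+1), if (i : ℕ) + 1 ≤ (k : ℕ) then gcirc m dc (tilde m x) k else 0

/-- `p(ε)_i = Σ_{k=i}^m p∘_k(ε)`. -/
def pFun (m : ℕ) (ε : ℝ) : Fin m → ℝ :=
  fun i => ∑ k : Fin (m+1), if (i : ℕ) + 1 ≤ (k : ℕ) then pcirc m ε k else 0

/-- `X_ε = {x ∈ ℝ^m : 0 ≤ x_i ≤ p(ε)_i}`. -/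
def Xset (m : ℕ) (ε : ℝ) : Set (Fin m → ℝ) := {x | ∀ i, 0 ≤ x i ∧ x i ≤ pFun m ε i}

/-- `Y = [0,1]^m`. -/
def Yset (m : ℕ) : Set (Fin m → ℝ) := {y | ∀ i, 0 ≤ y i ∧ y i ≤ 1}

/-- The continuous linear map `v ↦ Σ_s c_s v_s`, i.e. the row vector `c` viewed as a
linear functional; used to express gradients. -/
def rowDeriv (m : ℕ) (c : Fin m → ℝ) : (Fin m → ℝ) →L[ℝ] ℝ :=
  ∑ s : Fin m, c s • (ContinuousLinearMap.proj s : (Fin m → ℝ) →L[ℝ] ℝ)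

/-- The potential function `U(x; ε) = g(x) D xᵀ − G(x) − F(g(x); ε)` (with `ε` fixed,
absorbed into `F`). -/
def Upot (m dc : ℕ) (D : Matrix (Fin m) (Fin m) ℝ) (F G : (Fin m → ℝ) → ℝ)
    (x : Fin m → ℝ) : ℝ :=
  (∑ a : Fin m, ∑ b : Fin m, gFun m dc x a * D a b * x b) - G x - F (gFun m dc x)

/-!
In the coordinates `x ↦ x̃`, the order `x ≤ y` on `ℝ^m` is the stochastic (tail) order on
probability vectors, and one round of density evolution is `x∘ ↦ p∘ ⊡ ⊡^{d_v-1} (⊠^{d_c-1} x∘)`.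
The kernels `V` and `C` are symmetric in `(i, j)` (double count pairs of subspaces, using that
`GL_m(𝔽₂)` acts transitively on subspaces of a given dimension) and stochastically monotone in `i`
(`dim (U ⊓ W)` and `dim (U ⊔ W)` grow with `W`), so by Abel summation `⊡` and `⊠` preserve the
stochastic order and the DE map is monotone. As `V_{i,j,k} = 0` for `k > i`, the DE map sends
everything below `p(ε)`. The DE sequence is therefore coordinatewise nonincreasing and bounded
below by `0`, hence convergent, and by continuity its limit is a fixed point.
-/

open Module Finset

theorem Set.ncard_setOf_eq_sum_ite {α : Type*} [Fintype α] (P : α → Prop) [DecidablePred P] :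
    {a | P a}.ncard = ∑ a, if P a then 1 else 0 := by
  rw [Set.ncard_eq_toFinset_card', Set.toFinset_ofPred, Finset.card_filter]

namespace Submodule

variable {K E : Type*} [Field K] [AddCommGroup E] [Module K E] [FiniteDimensional K E]

theorem exists_linearEquiv_map_eq_of_finrank_eq {V W : Submodule K E}
    (h : finrank K V = finrank K W) : ∃ σ : E ≃ₗ[K] E, V.map (σ : E →ₗ[K] E) = W := by
  obtain ⟨V', hV'⟩ := V.exists_isCompl
  obtain ⟨W', hW'⟩ := W.exists_isCompl
  have h' : finrank K V' = finrank K W' := by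
    have := finrank_add_eq_of_isCompl hV'
    have := finrank_add_eq_of_isCompl hW'
    omega
  refine ⟨(prodEquivOfIsCompl V V' hV').symm ≪≫ₗ
    ((LinearEquiv.ofFinrankEq V W h).prodCongr (LinearEquiv.ofFinrankEq V' W' h')) ≪≫ₗ
      prodEquivOfIsCompl W W' hW', ?_⟩
  refine eq_of_le_of_finrank_eq ?_ (by rw [LinearEquiv.finrank_map_eq, h])
  rintro _ ⟨v, hv, rfl⟩
  have hv' : (prodEquivOfIsCompl V V' hV').symm v = ((⟨v, hv⟩ : V), (0 : V')) :=
    prodEquivOfIsCompl_symm_apply_left V V' hV' ⟨v, hv⟩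
  simp [hv']

theorem ncard_setOf_eq_of_finrank_eq (P : Submodule K E → Submodule K E → Prop)
    (hP : ∀ (σ : E ≃ₗ[K] E) U W,
      P (U.map (σ : E →ₗ[K] E)) (W.map (σ : E →ₗ[K] E)) ↔ P U W)
    {V W : Submodule K E} (h : finrank K V = finrank K W) :
    {U | P U V}.ncard = {U | P U W}.ncard := by
  obtain ⟨σ, rfl⟩ := exists_linearEquiv_map_eq_of_finrank_eq h
  let e := orderIsoMapComap σ
  rw [← Set.ncard_image_of_injective _ e.injective, e.image_eq_preimage_symm]
  congr 1
  ext U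
  change P (comap (σ : E →ₗ[K] E) U) V ↔ _
  rw [← hP σ, map_comap_eq_of_surjective σ.surjective]
  rfl

/-- Both sides count the pairs `(U, X)` with `dim U = dim W`, `dim X = dim V`, `R U X = k`. -/
theorem ncard_finrank_mul_ncard_comm [Finite (Submodule K E)]
    (R : Submodule K E → Submodule K E → ℕ)
    (hR : ∀ (σ : E ≃ₗ[K] E) U W,
      R (U.map (σ : E →ₗ[K] E)) (W.map (σ : E →ₗ[K] E)) = R U W)
    (hR_comm : ∀ U W, R U W = R W U) (V W : Submodule K E) (k : ℕ) :
    {X : Submodule K E | finrank K X = finrank K V}.ncard *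
        {U : Submodule K E | finrank K U = finrank K W ∧ R U V = k}.ncard =
      {X : Submodule K E | finrank K X = finrank K W}.ncard *
        {U : Submodule K E | finrank K U = finrank K V ∧ R U W = k}.ncard := by
  classical
  have := Fintype.ofFinite (Submodule K E)
  have pairs : ∀ V W : Submodule K E,
      {X : Submodule K E | finrank K X = finrank K V}.ncard *
        {U : Submodule K E | finrank K U = finrank K W ∧ R U V = k}.ncard =
      ∑ X : Submodule K E, ∑ U : Submodule K E,
        if finrank K X = finrank K V ∧ finrank K U = finrank K W ∧ R U X = k then 1 else 0 := by
    intro V W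
    rw [Set.ncard_setOf_eq_sum_ite, Finset.sum_mul]
    refine Finset.sum_congr rfl fun X _ => ?_
    by_cases hX : finrank K X = finrank K V
    · rw [if_pos hX, one_mul, ← Set.ncard_setOf_eq_sum_ite,
        ncard_setOf_eq_of_finrank_eq (fun U V => finrank K U = finrank K W ∧ R U V = k)
          (fun σ U V => by rw [hR, LinearEquiv.finrank_map_eq]) hX.symm]
      simp [hX]
    · simp [hX]
  rw [pairs, pairs, Finset.sum_comm]
  refine Finset.sum_congr rfl fun U _ => Finset.sum_congr rfl fun X _ => ?_
  simp only [hR_comm U, and_left_comm]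

end Submodule

section StochasticOrder

variable {m : ℕ}

def tail (a : Fin (m + 1) → ℝ) (t : ℕ) : ℝ :=
  ∑ k : Fin (m + 1), if t ≤ (k : ℕ) then a k else 0

def StochLE (a b : Fin (m + 1) → ℝ) : Prop := ∀ t, tail a t ≤ tail b t

theorem tail_eq_sum_filter (a : Fin (m + 1) → ℝ) (t : ℕ) :
    tail a t = ∑ k : Fin (m + 1) with t ≤ k.val, a k :=
  (sum_filter _ _).symm

theorem tail_zero (a : Fin (m + 1) → ℝ) : tail a 0 = ∑ k, a k := by
  simp [tail]

theorem tail_of_lt (a : Fin (m + 1) → ℝ) {t : ℕ} (ht : m < t) : tail a t = 0 :=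
  sum_eq_zero fun k _ => if_neg (by have := k.is_le; omega)

theorem tail_nonneg {a : Fin (m + 1) → ℝ} (ha : 0 ≤ a) (t : ℕ) : 0 ≤ tail a t :=
  sum_nonneg fun k _ => by split_ifs; exacts [ha k, le_rfl]

theorem tail_antitone {a : Fin (m + 1) → ℝ} (ha : 0 ≤ a) : Antitone (tail a) := by
  intro t t' htt'
  rw [tail_eq_sum_filter, tail_eq_sum_filter]
  exact sum_le_sum_of_subset_of_nonneg (monotone_filter_right _ fun k _ h => htt'.trans h)
    fun k _ _ => ha k

theorem tail_sub_tail_succ (a : Fin (m + 1) → ℝ) (k : Fin (m + 1)) :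
    tail a k - tail a (k + 1) = a k := by
  rw [tail, tail, ← sum_sub_distrib, sum_eq_single k]
  · simp
  · intro j _ hj
    have := Fin.val_ne_of_ne hj
    split_ifs <;> first | omega | simp
  · simp

theorem sum_mul_eq_tail_zero_mul_add (a φ : Fin (m + 1) → ℝ) :
    ∑ k, a k * φ k =
      tail a 0 * φ 0 + ∑ t : Fin m, tail a (t + 1) * (φ t.succ - φ t.castSucc) := by
  have hlast : tail a (Fin.last m + 1) = 0 := tail_of_lt a (by simp)
  calc ∑ k, a k * φ k
        = ∑ k : Fin (m + 1), tail a k * φ k - ∑ k : Fin (m + 1), tail a (k + 1) * φ k := by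
        simp only [← tail_sub_tail_succ a, sub_mul, sum_sub_distrib]
    _ = _ := by
        rw [Fin.sum_univ_succ, Fin.sum_univ_castSucc, hlast]
        simp only [Fin.coe_ofNat_eq_mod, Nat.zero_mod, Fin.val_succ, Fin.val_castSucc, zero_mul,
          add_zero, mul_sub, sum_sub_distrib]
        ring

theorem sum_mul_le_sum_mul_of_stochLE {a b φ : Fin (m + 1) → ℝ}
    (hsum : ∑ k, a k = ∑ k, b k) (hab : StochLE a b) (hφ : Monotone φ) :
    ∑ k, a k * φ k ≤ ∑ k, b k * φ k := by
  rw [sum_mul_eq_tail_zero_mul_add, sum_mul_eq_tail_zero_mul_add, tail_zero, tail_zero, hsum]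
  gcongr with t
  · exact sub_nonneg.2 (hφ (Fin.castSucc_le_succ t))
  · exact hab _

theorem StochLE.trans {a b c : Fin (m + 1) → ℝ} (hab : StochLE a b) (hbc : StochLE b c) :
    StochLE a c :=
  fun t => (hab t).trans (hbc t)

end StochasticOrder

section Kernel

variable {m : ℕ} {K : Fin (m + 1) → Fin (m + 1) → Fin (m + 1) → ℝ}

def kernelProd (K : Fin (m + 1) → Fin (m + 1) → Fin (m + 1) → ℝ)
    (a b : Fin (m + 1) → ℝ) : Fin (m + 1) → ℝ :=
  fun k => ∑ i, ∑ j, K i j k * a i * b j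

/-- `kernelPow K n a` is the `(n+1)`-fold `kernelProd K`-product of `a` with itself. -/
def kernelPow (K : Fin (m + 1) → Fin (m + 1) → Fin (m + 1) → ℝ) :
    ℕ → (Fin (m + 1) → ℝ) → Fin (m + 1) → ℝ
  | 0, a => a
  | n + 1, a => kernelProd K a (kernelPow K n a)

structure IsMonotoneKernel (K : Fin (m + 1) → Fin (m + 1) → Fin (m + 1) → ℝ) : Prop where
  mem_stdSimplex : ∀ i j, K i j ∈ stdSimplex ℝ (Fin (m + 1))
  comm : ∀ i j, K i j = K j i
  tail_mono : ∀ j t, Monotone fun i => tail (K i j) t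

theorem kernelProd_comm (hK : ∀ i j, K i j = K j i) (a b : Fin (m + 1) → ℝ) :
    kernelProd K a b = kernelProd K b a := by
  ext k
  rw [kernelProd, kernelProd, sum_comm]
  exact sum_congr rfl fun j _ => sum_congr rfl fun i _ => by rw [hK]; ring

theorem sum_kernelProd (hK : ∀ i j, ∑ k, K i j k = 1) (a b : Fin (m + 1) → ℝ) :
    ∑ k, kernelProd K a b k = (∑ i, a i) * ∑ j, b j := by
  simp only [kernelProd, sum_mul_sum]
  rw [sum_comm]
  refine sum_congr rfl fun i _ => ?_
  rw [sum_comm]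
  simp [← sum_mul, hK]

theorem tail_kernelProd (a b : Fin (m + 1) → ℝ) (t : ℕ) :
    tail (kernelProd K a b) t = ∑ i, a i * ∑ j, b j * tail (K i j) t := by
  simp only [tail_eq_sum_filter, kernelProd, mul_sum]
  rw [sum_comm]
  refine sum_congr rfl fun i _ => ?_
  rw [sum_comm]
  exact sum_congr rfl fun j _ => sum_congr rfl fun k _ => by ring

theorem kernelProd_mono_left (hK : ∀ j t, Monotone fun i => tail (K i j) t)
    {a a' b : Fin (m + 1) → ℝ} (hsum : ∑ k, a k = ∑ k, a' k) (ha : StochLE a a')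
    (hb : 0 ≤ b) : StochLE (kernelProd K a b) (kernelProd K a' b) := by
  intro t
  rw [tail_kernelProd, tail_kernelProd]
  exact sum_mul_le_sum_mul_of_stochLE hsum ha fun i i' hi =>
    sum_le_sum fun j _ => mul_le_mul_of_nonneg_left (hK j t hi) (hb j)

theorem kernelProd_mem_stdSimplex (hK : ∀ i j, K i j ∈ stdSimplex ℝ (Fin (m + 1)))
    {a b : Fin (m + 1) → ℝ} (ha : a ∈ stdSimplex ℝ (Fin (m + 1)))
    (hb : b ∈ stdSimplex ℝ (Fin (m + 1))) :
    kernelProd K a b ∈ stdSimplex ℝ (Fin (m + 1)) :=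
  ⟨fun k => sum_nonneg fun i _ => sum_nonneg fun j _ =>
      mul_nonneg (mul_nonneg ((hK i j).1 k) (ha.1 i)) (hb.1 j),
    by rw [sum_kernelProd fun i j => (hK i j).2, ha.2, hb.2, one_mul]⟩

theorem kernelPow_mem_stdSimplex (hK : ∀ i j, K i j ∈ stdSimplex ℝ (Fin (m + 1))) (n : ℕ)
    {a : Fin (m + 1) → ℝ} (ha : a ∈ stdSimplex ℝ (Fin (m + 1))) :
    kernelPow K n a ∈ stdSimplex ℝ (Fin (m + 1)) := by
  induction n with
  | zero => exact ha
  | succ n ih => exact kernelProd_mem_stdSimplex hK ha ih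

namespace IsMonotoneKernel

theorem kernelProd_mono (hK : IsMonotoneKernel K) {a a' b b' : Fin (m + 1) → ℝ}
    (ha : a ∈ stdSimplex ℝ (Fin (m + 1))) (ha' : a' ∈ stdSimplex ℝ (Fin (m + 1)))
    (hb : b ∈ stdSimplex ℝ (Fin (m + 1))) (hb' : b' ∈ stdSimplex ℝ (Fin (m + 1)))
    (haa' : StochLE a a') (hbb' : StochLE b b') :
    StochLE (kernelProd K a b) (kernelProd K a' b') := by
  have hleft : StochLE (kernelProd K a b) (kernelProd K a' b) :=
    kernelProd_mono_left hK.tail_mono (ha.2.trans ha'.2.symm) haa' hb.1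
  have hright : StochLE (kernelProd K b a') (kernelProd K b' a') :=
    kernelProd_mono_left hK.tail_mono (hb.2.trans hb'.2.symm) hbb' ha'.1
  rw [kernelProd_comm hK.comm b a', kernelProd_comm hK.comm b' a'] at hright
  exact hleft.trans hright

theorem kernelPow_mono (hK : IsMonotoneKernel K) (n : ℕ) {a a' : Fin (m + 1) → ℝ}
    (ha : a ∈ stdSimplex ℝ (Fin (m + 1))) (ha' : a' ∈ stdSimplex ℝ (Fin (m + 1)))
    (haa' : StochLE a a') : StochLE (kernelPow K n a) (kernelPow K n a') := by
  induction n with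
  | zero => exact haa'
  | succ n ih =>
    exact hK.kernelProd_mono ha ha' (kernelPow_mem_stdSimplex hK.mem_stdSimplex n ha)
      (kernelPow_mem_stdSimplex hK.mem_stdSimplex n ha') haa' ih

end IsMonotoneKernel

theorem sum_kernelPow (hK : ∀ i j, ∑ k, K i j k = 1) (n : ℕ) (a : Fin (m + 1) → ℝ) :
    ∑ k, kernelPow K n a k = (∑ k, a k) ^ (n + 1) := by
  induction n with
  | zero => simp [kernelPow]
  | succ n ih =>
    rw [kernelPow, sum_kernelProd hK, ih]
    ring

theorem kernelProd_stochLE_left (hK : ∀ i j, K i j ∈ stdSimplex ℝ (Fin (m + 1)))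
    (hsupp : ∀ i j k, i < k → K i j k = 0) {a b : Fin (m + 1) → ℝ} (ha : 0 ≤ a)
    (hb : b ∈ stdSimplex ℝ (Fin (m + 1))) : StochLE (kernelProd K a b) a := by
  intro t
  have hKt : ∀ i j, tail (K i j) t ≤ if t ≤ (i : ℕ) then 1 else 0 := fun i j => by
    split_ifs with hti
    · exact ((tail_antitone (hK i j).1) (Nat.zero_le t)).trans_eq
        ((tail_zero _).trans (hK i j).2)
    · exact (sum_eq_zero fun k _ => by
        split_ifs with htk
        · exact hsupp i j k (by omega)
        · rfl).le
  calc tail (kernelProd K a b) t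
      ≤ ∑ i, a i * ∑ j, b j * if t ≤ (i : ℕ) then 1 else 0 := by
        rw [tail_kernelProd]
        gcongr with i _ j
        exacts [ha i, hb.1 j, hKt i j]
    _ = tail a t := by simp [hb.2, tail]

theorem Continuous.kernelProd {X : Type*} [TopologicalSpace X] {f g : X → Fin (m + 1) → ℝ}
    (hf : Continuous f) (hg : Continuous g) : Continuous fun x => kernelProd K (f x) (g x) := by
  unfold _root_.kernelProd
  fun_prop

theorem continuous_kernelPow (n : ℕ) : Continuous (kernelPow K n) := by
  induction n with
  | zero => exact continuous_id
  | succ n ih => exact continuous_id.kernelProd ih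

end Kernel

section SubspacesOfF2

variable {m : ℕ}

local notation "Sub₂" m => Submodule (ZMod 2) (Fin m → ZMod 2)

theorem stdW_eq_ker (m i : ℕ) :
    stdW m i = LinearMap.ker (LinearMap.funLeft (ZMod 2) (ZMod 2)
      (Subtype.val : {t : Fin m // i ≤ (t : ℕ)} → Fin m)) := by
  rw [stdW, ← Submodule.span_eq (LinearMap.ker _)]
  congr 1
  ext x
  simp [funext_iff, LinearMap.funLeft]

theorem finrank_stdW {i : ℕ} (hi : i ≤ m) : finrank (ZMod 2) (stdW m i) = i := by
  have h := LinearMap.finrank_range_add_finrank_ker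
    (LinearMap.funLeft (ZMod 2) (ZMod 2) (Subtype.val : {t : Fin m // i ≤ (t : ℕ)} → Fin m))
  have hcard : Fintype.card {t : Fin m // i ≤ (t : ℕ)} + i = m := by
    have hlt : #{t : Fin m | (t : ℕ) < i} = i := by rw [Fin.card_filter_val_lt, min_eq_right hi]
    have := card_filter_add_card_filter_not (s := univ) (fun t : Fin m => i ≤ (t : ℕ))
    simp only [not_le, hlt, card_univ, Fintype.card_fin] at this
    rwa [Fintype.card_subtype]
  rw [LinearMap.range_eq_top.2 (LinearMap.funLeft_surjective_of_injective _ _ _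
    Subtype.val_injective), finrank_top, finrank_fintype_fun_eq_card, finrank_fin_fun] at h
  rw [stdW_eq_ker]
  omega

theorem stdW_mono (m : ℕ) : Monotone (stdW m) :=
  fun _ _ h => Submodule.span_mono fun _ hx t ht => hx t (h.trans ht)

theorem numDim_pos {j : ℕ} (hj : j ≤ m) : 0 < numDim m j :=
  (Set.ncard_pos (Set.toFinite _)).2 ⟨stdW m j, finrank_stdW hj⟩

/-- Abstracts the two statistics `(U, W) ↦ dim (U ⊓ W)` and `(U, W) ↦ dim (U ⊔ W)`. -/
structure IsSubspaceStat (R : (Sub₂ m) → (Sub₂ m) → ℕ) : Prop where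
  map_equiv : ∀ (σ : (Fin m → ZMod 2) ≃ₗ[ZMod 2] (Fin m → ZMod 2)) U W,
    R (U.map (σ : (Fin m → ZMod 2) →ₗ[ZMod 2] (Fin m → ZMod 2)))
      (W.map (σ : (Fin m → ZMod 2) →ₗ[ZMod 2] (Fin m → ZMod 2))) = R U W
  comm : ∀ U W, R U W = R W U
  mono : ∀ U, Monotone (R U)
  le : ∀ U W, R U W ≤ m

def subspaceStatProb (R : (Sub₂ m) → (Sub₂ m) → ℕ) (i j k : ℕ) : ℝ :=
  ({U : Sub₂ m | finrank (ZMod 2) U = j ∧ R U (stdW m i) = k}.ncard : ℝ) / numDim m j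

theorem sum_ncard_eq_ncard_le {R : (Sub₂ m) → (Sub₂ m) → ℕ} (hR : ∀ U W, R U W ≤ m)
    (j t : ℕ) (W : Sub₂ m) :
    ∑ k : Fin (m + 1), (if t ≤ (k : ℕ) then
        {U : Sub₂ m | finrank (ZMod 2) U = j ∧ R U W = k}.ncard else 0) =
      {U : Sub₂ m | finrank (ZMod 2) U = j ∧ t ≤ R U W}.ncard := by
  classical
  have := Fintype.ofFinite (Sub₂ m)
  simp only [Set.ncard_eq_toFinset_card', Set.toFinset_ofPred]
  rw [card_eq_sum_card_fiberwise
    (f := fun U => (⟨R U W, Nat.lt_succ_of_le (hR U W)⟩ : Fin (m + 1)))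
    (t := univ.filter fun k : Fin (m + 1) => t ≤ (k : ℕ)) (fun U hU => by simp_all), sum_filter]
  refine sum_congr rfl fun k _ => ?_
  split_ifs with htk
  · congr 1
    ext U
    simp only [mem_filter, mem_univ, true_and, Fin.ext_iff]
    constructor
    · rintro ⟨h1, h2⟩
      exact ⟨⟨h1, h2 ▸ htk⟩, h2⟩
    · rintro ⟨⟨h1, _⟩, h2⟩
      exact ⟨h1, h2⟩
  · rfl

theorem tail_subspaceStatProb {R : (Sub₂ m) → (Sub₂ m) → ℕ} (hR : ∀ U W, R U W ≤ m)
    (i j t : ℕ) :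
    tail (fun k : Fin (m + 1) => subspaceStatProb R i j k) t =
      ({U : Sub₂ m | finrank (ZMod 2) U = j ∧ t ≤ R U (stdW m i)}.ncard : ℝ) /
        numDim m j := by
  rw [← sum_ncard_eq_ncard_le hR, Nat.cast_sum, sum_div, tail]
  refine sum_congr rfl fun k _ => ?_
  split_ifs <;> simp [subspaceStatProb]

theorem subspaceStatProb_mem_stdSimplex {R : (Sub₂ m) → (Sub₂ m) → ℕ}
    (hR : ∀ U W, R U W ≤ m) (i : ℕ) {j : ℕ} (hj : j ≤ m) :
    (fun k : Fin (m + 1) => subspaceStatProb R i j k) ∈ stdSimplex ℝ (Fin (m + 1)) := by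
  refine ⟨fun k => by unfold subspaceStatProb; positivity, ?_⟩
  rw [← tail_zero, tail_subspaceStatProb hR]
  simp only [zero_le, and_true]
  exact div_self (Nat.cast_ne_zero.2 (numDim_pos hj).ne')

theorem subspaceStatProb_comm {R : (Sub₂ m) → (Sub₂ m) → ℕ} (hR : IsSubspaceStat R)
    {i j : ℕ} (hi : i ≤ m) (hj : j ≤ m) (k : ℕ) :
    subspaceStatProb R i j k = subspaceStatProb R j i k := by
  have h := Submodule.ncard_finrank_mul_ncard_comm R hR.map_equiv hR.comm (stdW m i) (stdW m j) k
  rw [finrank_stdW hi, finrank_stdW hj] at h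
  have hi' : (numDim m i : ℝ) ≠ 0 := Nat.cast_ne_zero.2 (numDim_pos hi).ne'
  have hj' : (numDim m j : ℝ) ≠ 0 := Nat.cast_ne_zero.2 (numDim_pos hj).ne'
  rw [subspaceStatProb, subspaceStatProb, div_eq_div_iff hj' hi']
  exact_mod_cast (mul_comm _ _).trans (h.trans (mul_comm _ _))

theorem tail_subspaceStatProb_mono {R : (Sub₂ m) → (Sub₂ m) → ℕ} (hR : IsSubspaceStat R)
    (j t : ℕ) {i i' : ℕ} (hii' : i ≤ i') :
    tail (fun k : Fin (m + 1) => subspaceStatProb R i j k) t ≤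
      tail (fun k : Fin (m + 1) => subspaceStatProb R i' j k) t := by
  rw [tail_subspaceStatProb hR.le, tail_subspaceStatProb hR.le]
  gcongr ?_ / _
  refine Nat.cast_le.2 (Set.ncard_le_ncard ?_)
  rintro U ⟨hj, ht⟩
  exact ⟨hj, ht.trans (hR.mono U (stdW_mono m hii'))⟩

theorem IsSubspaceStat.isMonotoneKernel {R : (Sub₂ m) → (Sub₂ m) → ℕ}
    (hR : IsSubspaceStat R) :
    IsMonotoneKernel fun i j k : Fin (m + 1) => subspaceStatProb R i j k where
  mem_stdSimplex i j := subspaceStatProb_mem_stdSimplex hR.le i j.is_le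
  comm i j := funext fun k => subspaceStatProb_comm hR i.is_le j.is_le k
  tail_mono j t _ _ h := tail_subspaceStatProb_mono hR j t h

theorem isSubspaceStat_finrank_inf :
    IsSubspaceStat fun U W : Sub₂ m => finrank (ZMod 2) ↥(U ⊓ W) where
  map_equiv σ U W := by rw [← Submodule.map_inf _ σ.injective, LinearEquiv.finrank_map_eq]
  comm U W := by rw [inf_comm]
  mono U _ _ h := Submodule.finrank_mono (inf_le_inf_left U h)
  le U W := (Submodule.finrank_le _).trans_eq (finrank_fin_fun _)

theorem isSubspaceStat_finrank_sup :
    IsSubspaceStat fun U W : Sub₂ m => finrank (ZMod 2) ↥(U ⊔ W) where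
  map_equiv σ U W := by rw [← Submodule.map_sup, LinearEquiv.finrank_map_eq]
  comm U W := by rw [sup_comm]
  mono U _ _ h := Submodule.finrank_mono (sup_le_sup_left h U)
  le U W := (Submodule.finrank_le _).trans_eq (finrank_fin_fun _)

theorem isMonotoneKernel_Vprob : IsMonotoneKernel fun i j k : Fin (m + 1) => Vprob m i j k :=
  isSubspaceStat_finrank_inf.isMonotoneKernel

theorem isMonotoneKernel_Cprob : IsMonotoneKernel fun i j k : Fin (m + 1) => Cprob m i j k :=
  isSubspaceStat_finrank_sup.isMonotoneKernel

theorem Vprob_eq_zero_of_lt {i k : ℕ} (hi : i ≤ m) (j : ℕ) (hik : i < k) :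
    Vprob m i j k = 0 := by
  have hempty :
      {U : Sub₂ m | finrank (ZMod 2) U = j ∧ finrank (ZMod 2) ↥(U ⊓ stdW m i) = k} = ∅ :=
    Set.eq_empty_of_forall_notMem fun U ⟨_, hk⟩ => by
      have := Submodule.finrank_mono (inf_le_right : U ⊓ stdW m i ≤ stdW m i)
      rw [finrank_stdW hi] at this
      omega
  simp [Vprob, numInter, hempty]

end SubspacesOfF2

section Coordinates

variable {m : ℕ}

def tails (c : Fin (m + 1) → ℝ) : Fin m → ℝ := fun i => tail c (i + 1)

theorem extSeq_of_lt (x : Fin m → ℝ) {t : ℕ} (ht : m < t) : extSeq m x t = 0 := by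
  rw [extSeq, dif_neg (by omega), dif_neg (by omega)]

theorem tail_tilde (x : Fin m → ℝ) (t : ℕ) : tail (tilde m x) t = extSeq m x t := by
  rcases le_or_gt t (m + 1) with ht | ht
  · induction ht using Nat.decreasingInduction with
    | self => rw [tail_of_lt _ (Nat.lt_succ_self m), extSeq_of_lt x (Nat.lt_succ_self m)]
    | of_succ k hk ih =>
      have h := tail_sub_tail_succ (tilde m x) ⟨k, hk⟩
      simp only [tilde] at h
      linarith
  · rw [tail_of_lt _ (by omega), extSeq_of_lt x (by omega)]

theorem tails_tilde (x : Fin m → ℝ) : tails (tilde m x) = x := by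
  ext i
  rw [tails, tail_tilde, extSeq, dif_neg (by omega), dif_pos (by omega)]
  simp

theorem sum_tilde (x : Fin m → ℝ) : ∑ k, tilde m x k = 1 := by
  rw [← tail_zero, tail_tilde, extSeq, dif_pos rfl]

theorem extSeq_tails {c : Fin (m + 1) → ℝ} (hc : ∑ k, c k = 1) (t : ℕ) :
    extSeq m (tails c) t = tail c t := by
  rcases Nat.eq_zero_or_pos t with rfl | ht
  · rw [extSeq, dif_pos rfl, tail_zero, hc]
  rcases le_or_gt t m with htm | htm
  · rw [extSeq, dif_neg (by omega), dif_pos htm, tails]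
    congr 1
    simp
    omega
  · rw [extSeq_of_lt _ htm, tail_of_lt _ htm]

theorem tilde_tails {c : Fin (m + 1) → ℝ} (hc : ∑ k, c k = 1) : tilde m (tails c) = c := by
  ext k
  rw [tilde, extSeq_tails hc, extSeq_tails hc, tail_sub_tail_succ]

theorem stochLE_tilde_iff {x y : Fin m → ℝ} : StochLE (tilde m x) (tilde m y) ↔ x ≤ y := by
  refine ⟨fun h i => ?_, fun h t => ?_⟩
  · rw [← tails_tilde x, ← tails_tilde y]
    exact h _
  · rw [tail_tilde, tail_tilde, extSeq, extSeq]
    split_ifs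
    exacts [le_rfl, h _, le_rfl]

theorem tails_nonneg {c : Fin (m + 1) → ℝ} (hc : 0 ≤ c) : 0 ≤ tails c :=
  fun _ => tail_nonneg hc _

theorem tails_mono {c c' : Fin (m + 1) → ℝ} (h : StochLE c c') : tails c ≤ tails c' :=
  fun _ => h _

theorem continuous_tails : Continuous (tails : (Fin (m + 1) → ℝ) → Fin m → ℝ) := by
  unfold tails tail
  refine continuous_pi fun i => continuous_finsetSum _ fun k _ => ?_
  split_ifs <;> fun_prop

theorem continuous_tilde : Continuous (tilde m) := by
  refine continuous_pi fun k => ?_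
  unfold tilde extSeq
  split_ifs <;> fun_prop

end Coordinates

section DensityEvolution

variable {m dv dc : ℕ} {ε : ℝ}

local notation "Vker" m => fun i j k : Fin (m + 1) => Vprob m i j k
local notation "Cker" m => fun i j k : Fin (m + 1) => Cprob m i j k

def deStep (m dv dc : ℕ) (ε : ℝ) (x : Fin m → ℝ) : Fin m → ℝ :=
  fFun m dv ε (gFun m dc x)

theorem pFun_eq_tails (m : ℕ) (ε : ℝ) : pFun m ε = tails (pcirc m ε) := rfl

theorem boxdotPow_eq_kernelPow (n : ℕ) (a : Fin (m + 1) → ℝ) :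
    boxdotPow m n a = kernelPow (Vker m) n a := by
  induction n with
  | zero => rfl
  | succ n ih => exact congrArg (boxdot m a) ih

theorem boxtimesPow_eq_kernelPow (n : ℕ) (a : Fin (m + 1) → ℝ) :
    boxtimesPow m n a = kernelPow (Cker m) n a := by
  induction n with
  | zero => rfl
  | succ n ih => exact congrArg (boxtimes m a) ih

theorem fcirc_eq_kernelProd (y : Fin (m + 1) → ℝ) :
    fcirc m dv ε y = kernelProd (Vker m) (pcirc m ε) (kernelPow (Vker m) (dv - 2) y) := by
  rw [fcirc, boxdotPow_eq_kernelPow]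
  rfl

theorem gcirc_eq_kernelPow (x : Fin (m + 1) → ℝ) :
    gcirc m dc x = kernelPow (Cker m) (dc - 2) x :=
  boxtimesPow_eq_kernelPow _ _

theorem sum_pcirc (m : ℕ) (ε : ℝ) : ∑ k, pcirc m ε k = 1 := by
  calc ∑ k, pcirc m ε k = ∑ i ∈ range (m + 1), ε ^ i * (1 - ε) ^ (m - i) * m.choose i := by
        unfold pcirc
        rw [Fin.sum_univ_eq_sum_range (fun i => (m.choose i : ℝ) * ε ^ i * (1 - ε) ^ (m - i))]
        exact sum_congr rfl fun i _ => by ring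
    _ = 1 := by rw [← add_pow, add_sub_cancel, one_pow]

theorem pcirc_mem_stdSimplex (hε : ε ∈ Set.Icc (0 : ℝ) 1) :
    pcirc m ε ∈ stdSimplex ℝ (Fin (m + 1)) :=
  ⟨fun k => by have := hε.1; have := sub_nonneg.2 hε.2; unfold pcirc; positivity,
    sum_pcirc m ε⟩

theorem sum_gcirc (x : Fin (m + 1) → ℝ) (hx : ∑ k, x k = 1) : ∑ k, gcirc m dc x k = 1 := by
  rw [gcirc_eq_kernelPow, sum_kernelPow fun i j => (isMonotoneKernel_Cprob.mem_stdSimplex i j).2,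
    hx, one_pow]

theorem sum_fcirc (y : Fin (m + 1) → ℝ) (hy : ∑ k, y k = 1) :
    ∑ k, fcirc m dv ε y k = 1 := by
  have hV := fun i j => (isMonotoneKernel_Vprob (m := m).mem_stdSimplex i j).2
  rw [fcirc_eq_kernelProd, sum_kernelProd hV, sum_kernelPow hV, hy, one_pow, sum_pcirc, one_mul]

theorem deStep_eq_tails (x : Fin m → ℝ) :
    deStep m dv dc ε x = tails (fcirc m dv ε (gcirc m dc (tilde m x))) := by
  change tails (fcirc m dv ε (tilde m (tails (gcirc m dc (tilde m x))))) = _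
  rw [tilde_tails (sum_gcirc _ (sum_tilde x))]

theorem tilde_deStep (x : Fin m → ℝ) :
    tilde m (deStep m dv dc ε x) = fcirc m dv ε (gcirc m dc (tilde m x)) := by
  rw [deStep_eq_tails, tilde_tails (sum_fcirc _ (sum_gcirc _ (sum_tilde x)))]

theorem tilde_deStep_mem_stdSimplex (hε : ε ∈ Set.Icc (0 : ℝ) 1) {x : Fin m → ℝ}
    (hx : tilde m x ∈ stdSimplex ℝ (Fin (m + 1))) :
    tilde m (deStep m dv dc ε x) ∈ stdSimplex ℝ (Fin (m + 1)) := by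
  rw [tilde_deStep, fcirc_eq_kernelProd, gcirc_eq_kernelPow]
  have hV := isMonotoneKernel_Vprob.mem_stdSimplex (m := m)
  exact kernelProd_mem_stdSimplex hV (pcirc_mem_stdSimplex hε) (kernelPow_mem_stdSimplex hV _
    (kernelPow_mem_stdSimplex isMonotoneKernel_Cprob.mem_stdSimplex _ hx))

theorem deStep_mono (hε : ε ∈ Set.Icc (0 : ℝ) 1) {x y : Fin m → ℝ}
    (hx : tilde m x ∈ stdSimplex ℝ (Fin (m + 1)))
    (hy : tilde m y ∈ stdSimplex ℝ (Fin (m + 1))) (hxy : x ≤ y) :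
    deStep m dv dc ε x ≤ deStep m dv dc ε y := by
  have hC := isMonotoneKernel_Cprob (m := m)
  have hV := isMonotoneKernel_Vprob (m := m)
  have hgx := kernelPow_mem_stdSimplex hC.mem_stdSimplex (dc - 2) hx
  have hgy := kernelPow_mem_stdSimplex hC.mem_stdSimplex (dc - 2) hy
  rw [deStep_eq_tails, deStep_eq_tails, fcirc_eq_kernelProd, fcirc_eq_kernelProd,
    gcirc_eq_kernelPow, gcirc_eq_kernelPow]
  refine tails_mono (hV.kernelProd_mono (pcirc_mem_stdSimplex hε) (pcirc_mem_stdSimplex hε)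
    (kernelPow_mem_stdSimplex hV.mem_stdSimplex _ hgx)
    (kernelPow_mem_stdSimplex hV.mem_stdSimplex _ hgy) (fun _ => le_rfl) ?_)
  exact hV.kernelPow_mono _ hgx hgy (hC.kernelPow_mono _ hx hy (stochLE_tilde_iff.2 hxy))

theorem deStep_le_pFun (hε : ε ∈ Set.Icc (0 : ℝ) 1) {x : Fin m → ℝ}
    (hx : tilde m x ∈ stdSimplex ℝ (Fin (m + 1))) : deStep m dv dc ε x ≤ pFun m ε := by
  have hV := isMonotoneKernel_Vprob (m := m)
  have hg := kernelPow_mem_stdSimplex isMonotoneKernel_Cprob.mem_stdSimplex (dc - 2) hx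
  rw [deStep_eq_tails, fcirc_eq_kernelProd, gcirc_eq_kernelPow]
  exact tails_mono (kernelProd_stochLE_left hV.mem_stdSimplex
    (fun i j k hik => Vprob_eq_zero_of_lt i.is_le j hik) (pcirc_mem_stdSimplex hε).1
    (kernelPow_mem_stdSimplex hV.mem_stdSimplex _ hg))

theorem continuous_deStep : Continuous (deStep m dv dc ε) := by
  have : deStep m dv dc ε = fun x => tails (fcirc m dv ε (gcirc m dc (tilde m x))) :=
    funext deStep_eq_tails
  rw [this]
  simp only [fcirc_eq_kernelProd, gcirc_eq_kernelPow]
  exact continuous_tails.comp (continuous_const.kernelProd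
    ((continuous_kernelPow _).comp ((continuous_kernelPow _).comp continuous_tilde)))

end DensityEvolution

theorem DE_converges_to_fixed_point_general (m dv dc : ℕ)
    (ε : ℝ) (hε : ε ∈ Set.Icc (0:ℝ) 1)
    (seq : ℕ → (Fin m → ℝ))
    (h0 : seq 0 = pFun m ε)
    (hstep : ∀ ℓ : ℕ, seq (ℓ + 1) = fFun m dv ε (gFun m dc (seq ℓ))) :
    ∃ xinf : Fin m → ℝ, Filter.Tendsto seq Filter.atTop (nhds xinf) ∧
      xinf = fFun m dv ε (gFun m dc xinf) := by
  have hmem : ∀ ℓ, tilde m (seq ℓ) ∈ stdSimplex ℝ (Fin (m + 1)) := by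
    intro ℓ
    induction ℓ with
    | zero => rw [h0, pFun_eq_tails, tilde_tails (sum_pcirc m ε)]; exact pcirc_mem_stdSimplex hε
    | succ ℓ ih => rw [hstep]; exact tilde_deStep_mem_stdSimplex hε ih
  have hanti : Antitone seq := by
    refine antitone_nat_of_succ_le fun ℓ => ?_
    induction ℓ with
    | zero => rw [hstep, h0]; exact deStep_le_pFun hε (h0 ▸ hmem 0)
    | succ ℓ ih =>
      calc seq (ℓ + 2) = deStep m dv dc ε (seq (ℓ + 1)) := hstep _
        _ ≤ deStep m dv dc ε (seq ℓ) := deStep_mono hε (hmem _) (hmem _) ih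
        _ = seq (ℓ + 1) := (hstep ℓ).symm
  have hbdd : BddBelow (Set.range seq) :=
    ⟨0, Set.forall_mem_range.2 fun ℓ => tails_tilde (seq ℓ) ▸ tails_nonneg (hmem ℓ).1⟩
  have hlim := tendsto_atTop_ciInf hanti hbdd
  have hiter : ∀ ℓ, seq ℓ = (deStep m dv dc ε)^[ℓ] (seq 0) := by
    intro ℓ
    induction ℓ with
    | zero => rfl
    | succ ℓ ih => rw [hstep, ih, Function.iterate_succ_apply']; rfl
  exact ⟨_, hlim,
    (isFixedPt_of_tendsto_iterate (hlim.congr hiter) continuous_deStep.continuousAt).symm⟩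

/-- **Corollary to Theorem 1.** The density evolution recursion
`x⁽⁰⁾ = p(ε)`, `x⁽ℓ⁺¹⁾ = f(g(x⁽ℓ⁾); ε)` converges to a fixed point. -/
theorem DE_converges_to_fixed_point (m dv dc : ℕ) (hm : 1 ≤ m) (hdv : 2 ≤ dv) (hdc : 2 ≤ dc)
    (ε : ℝ) (hε : ε ∈ Set.Icc (0:ℝ) 1)
    (seq : ℕ → (Fin m → ℝ))
    (h0 : seq 0 = pFun m ε)
    (hstep : ∀ ℓ : ℕ, seq (ℓ + 1) = fFun m dv ε (gFun m dc (seq ℓ))) :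
    ∃ xinf : Fin m → ℝ, Filter.Tendsto seq Filter.atTop (nhds xinf) ∧
      xinf = fFun m dv ε (gFun m dc xinf) :=
  DE_converges_to_fixed_point_general m dv dc ε hε seq h0 hstep

end
end

section
/- (Theorem 3: necessary coefficient-set condition for diagonal D.) Let h = (h_1,…,h_m) : ℝ^m → ℝ^m be a polynomial map, and define its coefficient sets S_h^j = {α ∈ ℕ^m : the coefficient of x_1^{α_1}⋯x_m^{α_m} in h_j is nonzero}. Suppose D is a diagonal m×m matrix with strictly positive diagonal entries d_{11},…,d_{mm}, and suppose there exists a differentiable H : ℝ^m → ℝ with gradient (as a row vector) H′(x) = h(x)·D for all x ∈ ℝ^m. Then for all i, j ∈ {1,…,m} and every multi-index α ∈ S_h^i with α_j ≥ 1, the multi-index α + e_i − e_j belongs to S_h^j (where e_i denotes the i-th standard unit multi-index). -/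
open scoped BigOperators

noncomputable section

/-
If `H' = h·D` with `D = diag(d)`, then `H` is a polynomial potential for the field `x ↦ (d_s h_s(x))_s`,
so the symmetry of the Hessian of `H` gives the polynomial identity `∂_j (d_i h_i) = ∂_i (d_j h_j)`.
Comparing the coefficients of `x^(α - e_j)` on both sides, a nonzero coefficient of `x^α` in `h_i`
forces a nonzero coefficient of `x^(α - e_j + e_i)` in `h_j`.
-/

@[simp]
lemma rowDeriv_apply (m : ℕ) (c v : Fin m → ℝ) : rowDeriv m c v = ∑ s, c s * v s := by
  simp [rowDeriv]

namespace MvPolynomial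

variable {m : ℕ}

theorem hasFDerivAt_eval (p : MvPolynomial (Fin m) ℝ) (x : Fin m → ℝ) :
    HasFDerivAt (fun y => eval y p) (rowDeriv m fun s => eval x (pderiv s p)) x := by
  induction p using MvPolynomial.induction_on with
  | C a => simpa [rowDeriv] using hasFDerivAt_const a x
  | add p q hp hq =>
    simp only [map_add]
    refine (hp.add hq).congr_fderiv ?_
    ext v; simp [add_mul, Finset.sum_add_distrib]
  | mul_X p n hp =>
    simp only [map_mul, eval_X]
    refine (hp.mul (ContinuousLinearMap.proj n).hasFDerivAt).congr_fderiv ?_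
    ext v
    simp [pderiv_X, Pi.single_apply, apply_ite (eval x), add_mul, Finset.sum_add_distrib,
      Finset.mul_sum, mul_assoc]

theorem hasFDerivAt_rowDeriv_eval (q : Fin m → MvPolynomial (Fin m) ℝ) (x : Fin m → ℝ) :
    HasFDerivAt (fun y => rowDeriv m fun s => eval y (q s))
      (∑ s, (rowDeriv m fun t => eval x (pderiv t (q s))).smulRight (ContinuousLinearMap.proj s))
      x := by
  change HasFDerivAt (fun y => ∑ s, eval y (q s) • ContinuousLinearMap.proj (R := ℝ) s) _ x
  exact HasFDerivAt.fun_sum fun s _ => (hasFDerivAt_eval (q s) x).smul_const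
    (ContinuousLinearMap.proj s : (Fin m → ℝ) →L[ℝ] ℝ)

theorem pderiv_comm_of_hasFDerivAt_rowDeriv {q : Fin m → MvPolynomial (Fin m) ℝ}
    {H : (Fin m → ℝ) → ℝ} (hH : ∀ x, HasFDerivAt H (rowDeriv m fun s => eval x (q s)) x)
    (i j : Fin m) : pderiv j (q i) = pderiv i (q j) := by
  refine funext fun x => ?_
  have hsymm := second_derivative_symmetric hH (hasFDerivAt_rowDeriv_eval q x) (Pi.single j 1)
    (Pi.single i 1)
  simpa [Pi.single_apply] using hsymm

theorem coeff_ne_zero_of_pderiv_eq {σ R : Type*} [DecidableEq σ] [CommSemiring R]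
    [NoZeroDivisors R] [CharZero R] {p q : MvPolynomial σ R} {i j : σ}
    (hpq : pderiv j p = pderiv i q) {α : σ →₀ ℕ} (hα : coeff α p ≠ 0) (hαj : 1 ≤ α j) :
    coeff (α + Finsupp.single i 1 - Finsupp.single j 1) q ≠ 0 := by
  have hle : Finsupp.single j 1 ≤ α := Finsupp.single_le_iff.mpr hαj
  set β := α - Finsupp.single j 1
  have hβ : β + Finsupp.single j 1 = α := tsub_add_cancel_of_le hle
  have hcoeff := congrArg (coeff β) hpq
  rw [coeff_pderiv, coeff_pderiv, hβ] at hcoeff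
  rw [← tsub_add_eq_add_tsub hle]
  exact left_ne_zero_of_mul (hcoeff ▸ mul_ne_zero hα (Nat.cast_add_one_ne_zero _))

end MvPolynomial

theorem diagonal_D_coefficient_condition_general (m : ℕ)
    (h : Fin m → MvPolynomial (Fin m) ℝ)
    (d : Fin m → ℝ) (hd : ∀ i, 0 < d i)
    (H : (Fin m → ℝ) → ℝ)
    (hH : ∀ x : Fin m → ℝ,
      HasFDerivAt H (rowDeriv m (fun s => MvPolynomial.eval x (h s) * d s)) x)
    (i j : Fin m) (α : Fin m →₀ ℕ)
    (hα : MvPolynomial.coeff α (h i) ≠ 0) (hαj : 1 ≤ α j) :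
    MvPolynomial.coeff (α + Finsupp.single i 1 - Finsupp.single j 1) (h j) ≠ 0 := by
  set q : Fin m → MvPolynomial (Fin m) ℝ := fun s => MvPolynomial.C (d s) * h s
  have hq : ∀ x, HasFDerivAt H (rowDeriv m fun s => MvPolynomial.eval x (q s)) x := by
    simpa [q, mul_comm] using hH
  have hqα : MvPolynomial.coeff α (q i) ≠ 0 := by
    simpa [q, MvPolynomial.coeff_C_mul] using mul_ne_zero (hd i).ne' hα
  have hqj := MvPolynomial.coeff_ne_zero_of_pderiv_eq
    (MvPolynomial.pderiv_comm_of_hasFDerivAt_rowDeriv hq i j) hqα hαj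
  rw [MvPolynomial.coeff_C_mul] at hqj
  exact right_ne_zero_of_mul hqj

/-- **Theorem 3: necessary coefficient-set condition for diagonal `D`.**
If `H` is a scalar function whose gradient is `h(x)·D` for a diagonal matrix `D` with
strictly positive diagonal entries, then for every monomial `α` appearing in `h_i` with
`α_j ≥ 1`, the monomial `α + e_i − e_j` appears in `h_j`. -/
theorem diagonal_D_coefficient_condition (m : ℕ) (hm : 1 ≤ m)
    (h : Fin m → MvPolynomial (Fin m) ℝ)
    (d : Fin m → ℝ) (hd : ∀ i, 0 < d i)
    (H : (Fin m → ℝ) → ℝ)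
    (hH : ∀ x : Fin m → ℝ,
      HasFDerivAt H (rowDeriv m (fun s => MvPolynomial.eval x (h s) * d s)) x)
    (i j : Fin m) (α : Fin m →₀ ℕ)
    (hα : MvPolynomial.coeff α (h i) ≠ 0) (hαj : 1 ≤ α j) :
    MvPolynomial.coeff (α + Finsupp.single i 1 - Finsupp.single j 1) (h j) ≠ 0 :=
  diagonal_D_coefficient_condition_general m h d hd H hH i j α hα hαj

end
end
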